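/- arXiv:1806.05642 — 2 statements merged into one kernel-verified Lean document; each statement's English description precedes it below -/
import Mathlib

section
/- Let d ≥ 2 be an integer and, for every n ≥ 0, let S_n be the grid graph on vertex set [-⌈n^{(d+1)/d}⌉, ⌈n^{(d+1)/d}⌉]^d ⊆ ℤ^d. Then there exists an activator sequence v = (v_n)_{n≥0} whose lower burning density satisfies δ̲(S, v) > 0. -/
open Filter Topology

namespace Burning

/-- Points of the `d`-dimensional integer lattice. -/
abbrev Pt (d : ℕ) := Fin d → ℤ

/-- The `L1`-distance between two lattice points. -/
def dist1 {d : ℕ} (x y : Pt d) : ℤ := ∑ i, |x i - y i|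

/-- The `L1`-norm of a lattice point. -/
def norm1 {d : ℕ} (x : Pt d) : ℤ := ∑ i, |x i|

/-- The closed neighbourhood of the set `B` in the grid graph on the vertex set `Vn`
(two vertices adjacent iff at `L1`-distance `1`). -/
def nbhd {d : ℕ} (Vn : Set (Pt d)) (B : Set (Pt d)) : Set (Pt d) :=
  B ∪ {x | x ∈ Vn ∧ ∃ b ∈ B, dist1 x b = 1}

/-- The burned sets of the activator sequence `v` in the sequence of grid graphs on the
vertex sets `V n`; `v n = none` means no vertex is activated at time `n` (the symbol `•`). -/
def burnSet {d : ℕ} (V : ℕ → Set (Pt d)) (v : ℕ → Option (Pt d)) : ℕ → Set (Pt d)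
  | 0 => (v 0).elim ∅ (fun x => {x})
  | n + 1 => nbhd (V (n + 1)) (burnSet V v n) ∪ (v (n + 1)).elim ∅ (fun x => {x})

/-- `v` is an activator sequence for the vertex sets `V`: every activated vertex is a
vertex of the current graph. -/
def IsActivator {d : ℕ} (V : ℕ → Set (Pt d)) (v : ℕ → Option (Pt d)) : Prop :=
  ∀ n x, v n = some x → x ∈ V n

/-- `v` is a valid activator sequence: each newly activated vertex lies in the current
vertex set and is not already burned at the current step. -/
def IsValid {d : ℕ} (V : ℕ → Set (Pt d)) (v : ℕ → Option (Pt d)) : Prop :=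
  ∀ n x, v (n + 1) = some x →
    x ∈ V (n + 1) ∧ x ∉ nbhd (V (n + 1)) (burnSet V v n)

/-- The proportion of burned vertices at time `n`. -/
noncomputable def densitySeq {d : ℕ} (V : ℕ → Set (Pt d)) (v : ℕ → Option (Pt d))
    (n : ℕ) : ℝ :=
  ((burnSet V v n).ncard : ℝ) / ((V n).ncard : ℝ)

/-- The closed `L1`-ball of radius `r` centred at `P`. -/
def ball1 {d : ℕ} (P : Pt d) (r : ℤ) : Set (Pt d) := {x | norm1 (x - P) ≤ r}

/-- The `L1`-sphere of radius `r` centred at `P`. -/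
def sphere1 {d : ℕ} (P : Pt d) (r : ℤ) : Set (Pt d) := {x | norm1 (x - P) = r}

/-- The square grid `[-a, a]² ⊆ ℤ²`. -/
def sqGrid (a : ℤ) : Set (Pt 2) := {x | ∀ i, |x i| ≤ a}

/-- The cube grid `[-a, a]^d ⊆ ℤ^d`. -/
def cubeGrid (d : ℕ) (a : ℤ) : Set (Pt d) := {x | ∀ i, |x i| ≤ a}

/-- The quadrant grid `[0, a]² ⊆ ℤ²`. -/
def quadGrid (a : ℤ) : Set (Pt 2) := {x | ∀ i, 0 ≤ x i ∧ x i ≤ a}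

end Burning

namespace BurnAux
open Burning

/-! ### The radius sequence -/

/-- The radius sequence. -/
noncomputable def aa (d : ℕ) (n : ℕ) : ℤ := ⌈(n : ℝ) ^ (((d : ℝ) + 1) / (d : ℝ))⌉

lemma exp_nonneg {d : ℕ} : (0:ℝ) ≤ ((d : ℝ) + 1) / (d : ℝ) := by positivity

lemma aa_nonneg {d : ℕ} (n : ℕ) : 0 ≤ aa d n := by
  have h : (0:ℝ) ≤ (n : ℝ) ^ (((d : ℝ) + 1) / (d : ℝ)) := Real.rpow_nonneg (by positivity) _
  unfold aa
  exact_mod_cast Int.ceil_nonneg h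

lemma aa_mono {d : ℕ} : Monotone (aa d) := by
  intro m n hmn
  exact Int.ceil_le_ceil (Real.rpow_le_rpow (by positivity) (by exact_mod_cast hmn) exp_nonneg)

lemma aa_one_le {d : ℕ} {n : ℕ} (hn : 1 ≤ n) : 1 ≤ aa d n := by
  have h : (1:ℝ) ≤ (n : ℝ) ^ (((d : ℝ) + 1) / (d : ℝ)) :=
    Real.one_le_rpow (by exact_mod_cast hn) exp_nonneg
  have h2 : (1:ℤ) ≤ ⌈(n : ℝ) ^ (((d : ℝ) + 1) / (d : ℝ))⌉ := by
    have := Int.le_ceil ((n : ℝ) ^ (((d : ℝ) + 1) / (d : ℝ)))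
    exact_mod_cast h.trans this
  exact h2

/-- Key growth estimate: the grid radius grows at least linearly. -/
lemma aa_add {d : ℕ} (hd : 1 ≤ d) {k n : ℕ} (hk : 1 ≤ k) (hkn : k ≤ n) :
    aa d k + ((n : ℤ) - (k : ℤ)) ≤ aa d n := by
  set e : ℝ := ((d : ℝ) + 1) / (d : ℝ) with he
  have hd0 : (0:ℝ) < (d:ℝ) := by exact_mod_cast hd
  have he1 : e - 1 = 1 / (d:ℝ) := by rw [he]; field_simp; ring
  have hk0 : (0:ℝ) < (k:ℝ) := by exact_mod_cast hk
  have hn0 : (0:ℝ) < (n:ℝ) := by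
    have : (k:ℝ) ≤ (n:ℝ) := by exact_mod_cast hkn
    linarith
  have hreal : (k:ℝ) ^ e + ((n:ℝ) - (k:ℝ)) ≤ (n:ℝ) ^ e := by
    have h1 : (k:ℝ) ^ e = (k:ℝ) * (k:ℝ) ^ (e - 1) := by
      rw [← Real.rpow_one_add' (le_of_lt hk0) (by rw [he1]; positivity)]
      ring_nf
    have h2 : (n:ℝ) ^ e = (n:ℝ) * (n:ℝ) ^ (e - 1) := by
      rw [← Real.rpow_one_add' (le_of_lt hn0) (by rw [he1]; positivity)]
      ring_nf
    have hkn' : (k:ℝ) ≤ (n:ℝ) := by exact_mod_cast hkn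
    have h3 : (1:ℝ) ≤ (k:ℝ) ^ (e - 1) := by
      apply Real.one_le_rpow (by exact_mod_cast hk) (by rw [he1]; positivity)
    have h4 : (k:ℝ) ^ (e - 1) ≤ (n:ℝ) ^ (e - 1) :=
      Real.rpow_le_rpow (le_of_lt hk0) hkn' (by rw [he1]; positivity)
    rw [h1, h2]
    nlinarith
  have heq : aa d k + ((n:ℤ) - (k:ℤ)) = ⌈(k:ℝ) ^ e + (((n:ℤ) - (k:ℤ) : ℤ) : ℝ)⌉ := by
    rw [Int.ceil_add_intCast]; rfl
  rw [heq]
  apply Int.ceil_le_ceil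
  push_cast
  linarith

/-! ### `norm1` and `cubeGrid` basics -/

lemma norm1_nonneg {d : ℕ} (x : Pt d) : 0 ≤ norm1 x :=
  Finset.sum_nonneg fun i _ => abs_nonneg _

lemma abs_le_norm1 {d : ℕ} (x : Pt d) (i : Fin d) : |x i| ≤ norm1 x :=
  Finset.single_le_sum (fun j _ => abs_nonneg (x j)) (Finset.mem_univ i)

lemma norm1_eq_zero {d : ℕ} {x : Pt d} (h : norm1 x ≤ 0) : x = 0 := by
  funext i
  have h1 := abs_le_norm1 x i
  have h2 := abs_nonneg (x i)
  have : x i = 0 := abs_eq_zero.mp (le_antisymm (h1.trans h) h2)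
  simpa using this

lemma cubeGrid_finite (d : ℕ) (a : ℤ) : (cubeGrid d a).Finite := by
  have h : cubeGrid d a ⊆ Set.univ.pi (fun _ : Fin d => Set.Icc (-a) a) := by
    intro x hx i _
    exact abs_le.mp (hx i)
  exact Set.Finite.subset (Set.Finite.pi fun _ => Set.finite_Icc _ _) h

lemma cubeGrid_zero_mem {d : ℕ} {a : ℤ} (ha : 0 ≤ a) : (0 : Pt d) ∈ cubeGrid d a := by
  intro i; simpa using ha

lemma cubeGrid_ncard_le (d : ℕ) {a : ℤ} (ha : 0 ≤ a) :
    (cubeGrid d a).ncard ≤ (2 * a + 1).toNat ^ d := by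
  set M := (2 * a + 1).toNat with hM
  set G : (Fin d → Fin M) → Pt d := fun y i => (y i : ℤ) - a with hG
  have hGinj : Function.Injective G := by
    intro y y' h
    funext i
    have h1 := congrFun h i
    simp only [hG] at h1
    have h2 : (y i : ℤ) = (y' i : ℤ) := by omega
    exact Fin.ext (by exact_mod_cast h2)
  have hsub : cubeGrid d a ⊆ Set.range G := by
    intro x hx
    have hx' : ∀ i, |x i| ≤ a := hx
    refine ⟨fun i => ⟨(x i + a).toNat, ?_⟩, ?_⟩
    · have := hx' i; rw [abs_le] at this; omega
    · funext i
      have := hx' i; rw [abs_le] at this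
      simp only [hG]
      omega
  calc (cubeGrid d a).ncard ≤ (Set.range G).ncard :=
        Set.ncard_le_ncard hsub (Set.finite_range G)
    _ = Nat.card (Set.range G) := (Nat.card_coe_set_eq _).symm
    _ = Nat.card (Fin d → Fin M) := Nat.card_range_of_injective hGinj
    _ = M ^ d := by simp [Nat.card_fun]

lemma cubeGrid_ncard_pos (d : ℕ) {a : ℤ} (ha : 0 ≤ a) : 0 < (cubeGrid d a).ncard :=
  (Set.ncard_pos (cubeGrid_finite d a)).mpr ⟨0, cubeGrid_zero_mem ha⟩

/-! ### The activator sequence -/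

/-- An equivalence enumerating `d`-tuples of digits below `L`. -/
noncomputable def enc (d L : ℕ) : (Fin d → Fin L) ≃ Fin (L ^ d) :=
  Fintype.equivFinOfCardEq (by simp)

/-- The lattice point of the `b`-th block with digit vector `j`. -/
def pt (d b : ℕ) (j : Fin d → ℕ) : Pt d := fun i => (2:ℤ) ^ (b + 4) * (j i)

/-- Auxiliary: the activation at time `n`, given the block index `b`. -/
noncomputable def actAux (d b n : ℕ) : Option (Pt d) :=
  if h : 8 * d ≤ b ∧ n - 2 ^ b < (2 ^ (b / d - 4)) ^ d ∧ n ≠ 0 then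
    some (pt d b (fun i => ((enc d (2 ^ (b / d - 4))).symm ⟨n - 2 ^ b, h.2.1⟩ i : ℕ)))
  else none

/-- The activator sequence. -/
noncomputable def act (d n : ℕ) : Option (Pt d) := actAux d (Nat.log 2 n) n

lemma act_zero (d : ℕ) : act d 0 = none := by
  simp [act, actAux]

/-- Any activated point has small nonnegative coordinates of the prescribed form. -/
lemma act_form {d n : ℕ} {P : Pt d} (h : act d n = some P) :
    8 * d ≤ Nat.log 2 n ∧ n ≠ 0 ∧
      ∀ i, ∃ j : ℕ, j < 2 ^ (Nat.log 2 n / d - 4) ∧ P i = (2:ℤ) ^ (Nat.log 2 n + 4) * j := by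
  unfold act actAux at h
  by_cases hc : 8 * d ≤ Nat.log 2 n ∧ n - 2 ^ Nat.log 2 n < (2 ^ (Nat.log 2 n / d - 4)) ^ d ∧ n ≠ 0
  · rw [dif_pos hc] at h
    refine ⟨hc.1, hc.2.2, fun i => ?_⟩
    refine ⟨((enc d (2 ^ (Nat.log 2 n / d - 4))).symm ⟨n - 2 ^ Nat.log 2 n, hc.2.1⟩ i : ℕ), ?_, ?_⟩
    · exact ((enc d _).symm _ i).isLt
    · have hP : P = pt d (Nat.log 2 n)
          (fun i => ((enc d (2 ^ (Nat.log 2 n / d - 4))).symm ⟨n - 2 ^ Nat.log 2 n, hc.2.1⟩ i : ℕ)) :=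
        (Option.some_inj.mp h).symm
      rw [hP]
      rfl
  · rw [dif_neg hc] at h
    exact absurd h (by simp)


lemma two_pow_pos' (b : ℕ) : 0 < 2 ^ b := Nat.two_pow_pos b

/-- Any activated point lies in the current grid. -/
lemma act_mem {d n : ℕ} (hd : 1 ≤ d) {P : Pt d} (h : act d n = some P) :
    ∀ i, |P i| ≤ aa d n := by
  obtain ⟨hb, hn, hform⟩ := act_form h
  set b := Nat.log 2 n with hbdef
  intro i
  obtain ⟨j, hj, hPi⟩ := hform i
  have hbd : 8 ≤ b / d := (Nat.le_div_iff_mul_le hd).mpr (by omega)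
  have hP0 : 0 ≤ P i := by rw [hPi]; positivity
  rw [abs_of_nonneg hP0, hPi]
  have h1 : (2:ℤ) ^ (b + 4) * (j:ℤ) ≤ (2:ℤ) ^ (b + b / d) := by
    have hj' : (j:ℤ) ≤ (2:ℤ) ^ (b / d - 4) := by
      have : (j:ℤ) < (2:ℤ) ^ (b / d - 4) := by exact_mod_cast hj
      omega
    calc (2:ℤ) ^ (b + 4) * (j:ℤ) ≤ (2:ℤ) ^ (b + 4) * (2:ℤ) ^ (b / d - 4) :=
          mul_le_mul_of_nonneg_left hj' (by positivity)
      _ = (2:ℤ) ^ ((b + 4) + (b / d - 4)) := (pow_add _ _ _).symm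
      _ = (2:ℤ) ^ (b + b / d) := by congr 1; omega
  refine h1.trans ?_
  -- 2 ^ (b + b/d) ≤ aa d (2^b) ≤ aa d n
  have h2b : (2:ℕ) ^ b ≤ n := Nat.pow_log_le_self 2 hn
  refine le_trans ?_ (aa_mono h2b)
  have hd0 : (0:ℝ) < (d:ℝ) := by exact_mod_cast hd
  have key : ((2:ℝ)) ^ (((b + b / d : ℕ)) : ℝ) ≤ (((2:ℕ) ^ b : ℕ) : ℝ) ^ (((d:ℝ) + 1) / (d:ℝ)) := by
    have hcast : (((2:ℕ) ^ b : ℕ) : ℝ) = (2:ℝ) ^ ((b:ℕ) : ℝ) := by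
      push_cast
      rw [Real.rpow_natCast]
    rw [hcast, ← Real.rpow_mul (by norm_num : (0:ℝ) ≤ 2)]
    apply Real.rpow_le_rpow_of_exponent_le one_le_two
    have hfloor : ((b / d : ℕ) : ℝ) ≤ (b : ℝ) / (d : ℝ) := Nat.cast_div_le
    have : (b:ℝ) * (((d:ℝ) + 1) / (d:ℝ)) = (b:ℝ) + (b:ℝ) / (d:ℝ) := by field_simp
    rw [this]
    push_cast
    linarith
  have : ((2:ℤ) ^ (b + b / d) : ℝ) ≤ ((aa d (2 ^ b) : ℤ) : ℝ) := by
    refine le_trans ?_ (Int.le_ceil _)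
    push_cast
    rw [Real.rpow_natCast] at key
    convert key using 2
    · rfl
    · norm_num
  exact_mod_cast this

/-- Computation of the activator sequence at the time steps of block `b`. -/
lemma act_block {d : ℕ} (hd : 1 ≤ d) {b : ℕ} (hb : 8 * d ≤ b)
    (j : Fin d → Fin (2 ^ (b / d - 4))) :
    act d (2 ^ b + ((enc d (2 ^ (b / d - 4))) j : ℕ)) =
      some (pt d b (fun i => (j i : ℕ))) := by
  have hm : ((enc d (2 ^ (b / d - 4))) j : ℕ) < (2 ^ (b / d - 4)) ^ d := Fin.isLt _
  have hbd : 8 ≤ b / d := (Nat.le_div_iff_mul_le hd).mpr (by omega)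
  have hLd : (2 ^ (b / d - 4)) ^ d ≤ 2 ^ b := by
    rw [← pow_mul]
    apply Nat.pow_le_pow_right (by norm_num)
    calc (b / d - 4) * d ≤ (b / d) * d := Nat.mul_le_mul_right _ (by omega)
      _ ≤ b := Nat.div_mul_le_self b d
  have hpos := two_pow_pos' b
  have hlog : Nat.log 2 (2 ^ b + ((enc d (2 ^ (b / d - 4))) j : ℕ)) = b := by
    apply Nat.log_eq_of_pow_le_of_lt_pow
    · omega
    · have h1 : ((enc d (2 ^ (b / d - 4))) j : ℕ) < 2 ^ b := lt_of_lt_of_le hm hLd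
      rw [pow_succ]
      omega
  unfold act
  rw [hlog]
  unfold actAux
  have hcond : 8 * d ≤ b ∧
      (2 ^ b + ((enc d (2 ^ (b / d - 4))) j : ℕ)) - 2 ^ b < (2 ^ (b / d - 4)) ^ d ∧
      (2 ^ b + ((enc d (2 ^ (b / d - 4))) j : ℕ)) ≠ 0 :=
    ⟨hb, by simpa using hm, by omega⟩
  rw [dif_pos hcond]
  congr 1
  have h1 : (⟨(2 ^ b + ((enc d (2 ^ (b / d - 4))) j : ℕ)) - 2 ^ b, hcond.2.1⟩ :
      Fin ((2 ^ (b / d - 4)) ^ d)) = (enc d (2 ^ (b / d - 4))) j := by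
    apply Fin.ext
    simp
  rw [h1, Equiv.symm_apply_apply]

/-- The burned set stays inside the (growing) grid. -/
lemma burnSet_subset {d : ℕ} (V : ℕ → Set (Pt d)) (v : ℕ → Option (Pt d))
    (hV : ∀ n, V n = cubeGrid d (aa d n)) (hv0 : v 0 = none)
    (hAct : ∀ n P, v n = some P → ∀ i, |P i| ≤ aa d n) :
    ∀ n, burnSet V v n ⊆ V n := by
  intro n
  induction n with
  | zero => rw [burnSet, hv0]; simp
  | succ n ih =>
    intro x hx
    rcases hx with hx | hx
    · rcases hx with hx | hx
      · have h1 := ih hx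
        rw [hV n] at h1; rw [hV (n+1)]
        intro i; exact (h1 i).trans (aa_mono (Nat.le_succ n))
      · exact hx.1
    · cases hvn : v (n+1) with
      | none => rw [hvn] at hx; simp at hx
      | some P =>
        rw [hvn] at hx
        simp only [Option.elim, Set.mem_singleton_iff] at hx
        subst hx
        rw [hV]
        exact hAct _ _ hvn

/-- The ball of radius `n - k` around a vertex activated at time `k ≥ 1` is burned
at time `n`. -/
lemma ball_subset_burn {d : ℕ} (hd : 1 ≤ d) (V : ℕ → Set (Pt d)) (v : ℕ → Option (Pt d))
    (hV : ∀ n, V n = cubeGrid d (aa d n))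
    (hAct : ∀ n P, v n = some P → ∀ i, |P i| ≤ aa d n)
    {k : ℕ} {P : Pt d} (hk : 1 ≤ k) (hvk : v k = some P) :
    ∀ n, k ≤ n → ∀ x : Pt d, norm1 (x - P) ≤ (n : ℤ) - (k : ℤ) → x ∈ burnSet V v n := by
  have hP : ∀ i, |P i| ≤ aa d k := hAct _ _ hvk
  intro n
  induction n with
  | zero => intro h0; exact absurd h0 (by omega)
  | succ n ih =>
    intro hkn x hx
    by_cases hkeq : k = n + 1
    · -- just-activated vertex: radius is `0`
      have h0 : norm1 (x - P) ≤ 0 := by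
        rw [hkeq] at hx; push_cast at hx; omega
      have hxP : x = P := sub_eq_zero.mp (norm1_eq_zero h0)
      subst hxP
      apply Set.mem_union_right
      rw [← hkeq, hvk]
      exact rfl
    · have hkn2 : k ≤ n := by omega
      by_cases hnear : norm1 (x - P) ≤ (n : ℤ) - (k : ℤ)
      · exact Set.mem_union_left _ (Set.mem_union_left _ (ih hkn2 x hnear))
      · push_neg at hnear
        have h1 : 1 ≤ norm1 (x - P) := by
          have : (0:ℤ) ≤ (n:ℤ) - (k:ℤ) := by
            have : (k:ℤ) ≤ (n:ℤ) := by exact_mod_cast hkn2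
            omega
          omega
        obtain ⟨i, hi⟩ : ∃ i, x i - P i ≠ 0 := by
          by_contra hall
          push_neg at hall
          have hsub : x - P = 0 := funext fun l => by
            simpa [Pi.sub_apply] using hall l
          rw [hsub] at h1
          simp [norm1] at h1
        set z := x i - P i with hz
        set y := Function.update x i (x i - Int.sign z) with hy
        have habs : |z - Int.sign z| = |z| - 1 := by
          rcases lt_or_gt_of_ne hi with h | h
          · rw [Int.sign_eq_neg_one_of_neg h, abs_of_nonpos (by omega),
              abs_of_nonpos (le_of_lt h)]
            ring
          · rw [Int.sign_eq_one_of_pos h, abs_of_nonneg (by omega), abs_of_pos h]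
        have hdec : ∀ g : Pt d, norm1 g = |g i| + ∑ l ∈ Finset.univ.erase i, |g l| := by
          intro g
          rw [norm1, ← Finset.add_sum_erase _ _ (Finset.mem_univ i)]
        have hyP : ∀ l, l ≠ i → y l = x l := by
          intro l hl; simp [hy, Function.update_of_ne hl]
        have hyPi : y i = x i - Int.sign z := by simp [hy]
        have hny : norm1 (y - P) = norm1 (x - P) - 1 := by
          rw [hdec (y - P), hdec (x - P)]
          have e2 : ∑ l ∈ Finset.univ.erase i, |(y - P) l| =
              ∑ l ∈ Finset.univ.erase i, |(x - P) l| := by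
            apply Finset.sum_congr rfl
            intro l hl
            rw [Pi.sub_apply, Pi.sub_apply, hyP l (Finset.ne_of_mem_erase hl)]
          rw [e2]
          have e1 : |(y - P) i| = |(x - P) i| - 1 := by
            rw [Pi.sub_apply, Pi.sub_apply, hyPi, ← hz]
            have : x i - Int.sign z - P i = z - Int.sign z := by rw [hz]; ring
            rw [this, habs]
          rw [e1]
          ring
        have hdist : dist1 x y = 1 := by
          rw [dist1]
          rw [Fintype.sum_eq_single i (fun l hl => by
            rw [hyP l hl]; simp)]
          rw [hyPi]
          have : x i - (x i - Int.sign z) = Int.sign z := by ring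
          rw [this]
          rcases lt_or_gt_of_ne hi with h | h
          · rw [Int.sign_eq_neg_one_of_neg h]; norm_num
          · rw [Int.sign_eq_one_of_pos h]; norm_num
        have hxV : x ∈ V (n + 1) := by
          rw [hV]
          intro l
          have h2 : |x l - P l| ≤ norm1 (x - P) := by
            simpa [Pi.sub_apply] using abs_le_norm1 (x - P) l
          have h3 : |x l| ≤ |P l| + |x l - P l| := by
            have : x l = P l + (x l - P l) := by ring
            rw [this]
            have := abs_add_le (P l) (x l + -P l)
            simpa [sub_eq_add_neg] using this
          have h4 := hP l
          have h5 := aa_add hd hk (Nat.le_succ_of_le hkn2)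
          push_cast at hx h5 ⊢
          linarith
        have hyB : y ∈ burnSet V v n := by
          apply ih hkn2 y
          rw [hny]
          push_cast at hx ⊢
          omega
        exact Set.mem_union_left _ (Set.mem_union_right _ ⟨hxV, y, hyB, hdist⟩)

lemma cancel_help {s a a' c c' : ℤ} (hs : 0 < s) (h : s * a + c = s * a' + c')
    (h0 : 0 ≤ c) (h1 : c < s) (h0' : 0 ≤ c') (h1' : c' < s) : a = a' ∧ c = c' := by
  have ha : a = a' := by
    by_contra hne
    rcases lt_or_gt_of_ne hne with hlt | hlt
    · have : s * (a + 1) ≤ s * a' := mul_le_mul_of_nonneg_left (by omega) (le_of_lt hs)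
      nlinarith
    · have : s * (a' + 1) ≤ s * a := mul_le_mul_of_nonneg_left (by omega) (le_of_lt hs)
      nlinarith
  subst ha
  exact ⟨rfl, by linarith⟩

lemma Ld_le {d b : ℕ} (hbd : 8 ≤ b / d) : (2 ^ (b / d - 4)) ^ d ≤ 2 ^ b := by
  rw [← pow_mul]
  apply Nat.pow_le_pow_right (by norm_num)
  calc (b / d - 4) * d ≤ (b / d) * d := Nat.mul_le_mul_right _ (by omega)
    _ ≤ b := Nat.div_mul_le_self b d

set_option maxHeartbeats 1000000 in
/-- The main counting estimate: a uniform positive lower bound for the burning density. -/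
lemma density_lower {d : ℕ} (hd : 2 ≤ d) (V : ℕ → Set (Pt d))
    (hV : ∀ m, V m = cubeGrid d (aa d m)) {n : ℕ} (hn : 2 ^ (8 * d + 3) ≤ n) :
    (1:ℝ) / ((2 ^ ((3 + (Nat.log 2 d + 1)) * d + 3 * (d + 1)) : ℕ) * 5 ^ d) ≤
      densitySeq V (act d) n := by
  have hd1 : 1 ≤ d := by omega
  have hAct : ∀ m P, act d m = some P → ∀ i, |P i| ≤ aa d m := fun m P h => act_mem hd1 h
  set t := Nat.log 2 d + 1 with ht
  have htd : d < 2 ^ t := Nat.lt_pow_succ_log_self one_lt_two d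
  have htle : t ≤ d := by
    have h1 : Nat.log 2 d < d := Nat.log_lt_of_lt_pow (by omega) (Nat.lt_two_pow_self)
    omega
  have hn0 : n ≠ 0 := by have := two_pow_pos' (8 * d + 3); omega
  set g := Nat.log 2 n with hg
  have hgge : 8 * d + 3 ≤ g := by
    have h1 : Nat.log 2 (2 ^ (8 * d + 3)) ≤ g := Nat.log_mono_right hn
    rwa [Nat.log_pow one_lt_two] at h1
  set b := g - 2 with hb
  have hb2 : b + 2 = g := by omega
  have hb8d : 8 * d ≤ b := by omega
  have hbd : 8 ≤ b / d := (Nat.le_div_iff_mul_le hd1).mpr (by omega)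
  have htb : t ≤ b + 1 := by omega
  have hn1 : 2 ^ (b + 2) ≤ n := by rw [hb2]; exact Nat.pow_log_le_self 2 hn0
  have hn2 : n < 2 ^ (b + 3) := by
    have := Nat.lt_pow_succ_log_self one_lt_two n
    have hb3 : b + 3 = g + 1 := by omega
    rwa [hb3]
  set L := 2 ^ (b / d - 4) with hL
  set ρ := 2 ^ (b + 1 - t) with hρ
  -- the injection producing many burned points
  set F : (Fin d → Fin L) × (Fin d → Fin (2 * ρ + 1)) → Pt d :=
    fun p l => (2:ℤ) ^ (b + 4) * ((p.1 l : ℕ) : ℤ) + ((p.2 l : ℕ) : ℤ) - (ρ : ℤ) with hF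
  have hρs : 2 * (ρ : ℤ) + 1 ≤ 2 ^ (b + 4) := by
    have h1 : (2:ℤ) * ρ + 1 ≤ 2 ^ 2 * ρ := by
      have : (1:ℤ) ≤ ρ := by rw [hρ]; exact_mod_cast Nat.one_le_two_pow
      push_cast
      nlinarith
    have h2 : (2:ℤ) ^ 2 * ρ = 2 ^ (2 + (b + 1 - t)) := by
      rw [hρ, pow_add]; push_cast; ring
    have h3 : (2:ℤ) ^ (2 + (b + 1 - t)) ≤ 2 ^ (b + 4) := by
      apply pow_le_pow_right₀ (by norm_num)
      omega
    linarith
  have hFinj : Function.Injective F := by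
    rintro ⟨j, y⟩ ⟨j', y'⟩ h
    have hco : ∀ l, (2:ℤ) ^ (b + 4) * ((j l : ℕ) : ℤ) + ((y l : ℕ) : ℤ) =
        (2:ℤ) ^ (b + 4) * ((j' l : ℕ) : ℤ) + ((y' l : ℕ) : ℤ) := by
      intro l
      have := congrFun h l
      simp only [hF] at this
      omega
    have hmain : ∀ l, ((j l : ℕ) : ℤ) = ((j' l : ℕ) : ℤ) ∧ ((y l : ℕ) : ℤ) = ((y' l : ℕ) : ℤ) := by
      intro l
      refine cancel_help (by positivity) (hco l) (by positivity) ?_ (by positivity) ?_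
      · have := (y l).isLt
        have h1 : ((y l : ℕ) : ℤ) < 2 * ρ + 1 := by exact_mod_cast this
        omega
      · have := (y' l).isLt
        have h1 : ((y' l : ℕ) : ℤ) < 2 * ρ + 1 := by exact_mod_cast this
        omega
    have hj : j = j' := funext fun l => Fin.ext (by exact_mod_cast (hmain l).1)
    have hy : y = y' := funext fun l => Fin.ext (by exact_mod_cast (hmain l).2)
    rw [hj, hy]
  have hLd2b : L ^ d ≤ 2 ^ b := Ld_le hbd
  -- every point in the range of `F` is burned at time `n`
  have hrange : Set.range F ⊆ burnSet V (act d) n := by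
    rintro _ ⟨⟨j, y⟩, rfl⟩
    have hact := act_block hd1 hb8d j
    set m := ((enc d L) j : ℕ) with hm
    set k := 2 ^ b + m with hk
    have hk1 : 1 ≤ k := by have := two_pow_pos' b; omega
    have hkle : k ≤ 2 ^ (b + 1) := by
      have h1 : m < L ^ d := ((enc d L) j).isLt
      have : 2 ^ (b + 1) = 2 ^ b + 2 ^ b := by ring
      omega
    have hkn : k ≤ n := by
      have : (2:ℕ) ^ (b + 1) ≤ 2 ^ (b + 2) := Nat.pow_le_pow_right (by norm_num) (by omega)
      omega
    apply ball_subset_burn hd1 V (act d) hV hAct hk1 hact n hkn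
    -- norm1 bound
    have hterm : ∀ l, |(F (j, y) - pt d b fun i => (j i : ℕ)) l| ≤ (ρ : ℤ) := by
      intro l
      have hFl : (F (j, y) - pt d b fun i => (j i : ℕ)) l = ((y l : ℕ) : ℤ) - ρ := by
        simp only [Pi.sub_apply, hF, pt]
        ring
      rw [hFl]
      have h1 : ((y l : ℕ) : ℤ) < 2 * ρ + 1 := by exact_mod_cast (y l).isLt
      have h2 : (0:ℤ) ≤ ((y l : ℕ) : ℤ) := by positivity
      rw [abs_le]
      omega
    have hnorm : norm1 (F (j, y) - pt d b fun i => (j i : ℕ)) ≤ (d : ℤ) * ρ := by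
      rw [norm1]
      calc ∑ l, |(F (j, y) - pt d b fun i => (j i : ℕ)) l| ≤ ∑ _l : Fin d, (ρ : ℤ) :=
            Finset.sum_le_sum fun l _ => hterm l
        _ = (d : ℤ) * ρ := by rw [Finset.sum_const]; simp [mul_comm]
    refine hnorm.trans ?_
    -- d * ρ ≤ 2^(b+1) ≤ n - k
    have hd2 : (d : ℤ) * ρ ≤ 2 ^ (b + 1) := by
      have h1 : (d : ℤ) ≤ 2 ^ t := by exact_mod_cast htd.le
      have h2 : ((ρ : ℕ) : ℤ) = 2 ^ (b + 1 - t) := by rw [hρ]; push_cast; ring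
      have h3 : (2:ℤ) ^ t * 2 ^ (b + 1 - t) = 2 ^ (t + (b + 1 - t)) := (pow_add 2 _ _).symm
      have h4 : t + (b + 1 - t) = b + 1 := by omega
      calc (d : ℤ) * ρ ≤ 2 ^ t * ρ := by
            apply mul_le_mul_of_nonneg_right h1 (by positivity)
        _ = 2 ^ (b + 1) := by rw [h2, h3, h4]
    refine hd2.trans ?_
    have h5 : (k : ℤ) ≤ 2 ^ (b + 1) := by exact_mod_cast hkle
    have h6 : (2:ℤ) ^ (b + 2) ≤ (n : ℤ) := by exact_mod_cast hn1
    have h7 : (2:ℤ) ^ (b + 2) = 2 ^ (b + 1) + 2 ^ (b + 1) := by ring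
    omega
  -- cardinality bounds
  have hBfin : (burnSet V (act d) n).Finite := by
    apply Set.Finite.subset (cubeGrid_finite d (aa d n))
    rw [← hV n]
    exact burnSet_subset V (act d) hV (act_zero d) hAct n
  have hcard1 : L ^ d * (2 * ρ + 1) ^ d ≤ (burnSet V (act d) n).ncard := by
    calc L ^ d * (2 * ρ + 1) ^ d
        = Nat.card ((Fin d → Fin L) × (Fin d → Fin (2 * ρ + 1))) := by
          simp [Nat.card_prod, Nat.card_fun]
      _ = Nat.card (Set.range F) := (Nat.card_range_of_injective hFinj).symm
      _ = (Set.range F).ncard := Nat.card_coe_set_eq _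
      _ ≤ _ := Set.ncard_le_ncard hrange hBfin
  have hcard2 : (V n).ncard ≤ (2 * aa d n + 1).toNat ^ d := by
    rw [hV n]
    exact cubeGrid_ncard_le d (aa_nonneg n)
  -- the purely arithmetic exponent bound
  set K := 2 ^ ((3 + t) * d + 3 * (d + 1)) with hK
  have hnat : n ^ (d + 1) ≤ L ^ d * (2 * ρ + 1) ^ d * K := by
    have h1 : n ^ (d + 1) ≤ 2 ^ ((b + 3) * (d + 1)) := by
      rw [pow_mul]
      exact Nat.pow_le_pow_left hn2.le (d + 1)
    have h2 : 2 ^ ((b / d - 4) * d) * 2 ^ ((b + 2 - t) * d) * K ≤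
        L ^ d * (2 * ρ + 1) ^ d * K := by
      apply Nat.mul_le_mul_right
      apply Nat.mul_le_mul
      · rw [hL, pow_mul]
      · have : 2 ^ (b + 2 - t) ≤ 2 * ρ + 1 := by
          rw [hρ]
          have : (2:ℕ) * 2 ^ (b + 1 - t) = 2 ^ (b + 2 - t) := by
            rw [← pow_succ']
            congr 1
            omega
          omega
        calc (2:ℕ) ^ ((b + 2 - t) * d) = (2 ^ (b + 2 - t)) ^ d := by rw [pow_mul]
          _ ≤ (2 * ρ + 1) ^ d := Nat.pow_le_pow_left this d
    refine h1.trans (le_trans ?_ h2)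
    rw [hK, ← pow_add, ← pow_add]
    apply Nat.pow_le_pow_right (by norm_num)
    -- exponent inequality
    obtain ⟨u, hu⟩ : ∃ u, b / d = u + 4 := ⟨b / d - 4, by omega⟩
    obtain ⟨sv, hsv⟩ : ∃ sv, b + 2 = sv + t := ⟨b + 2 - t, by omega⟩
    have hdm : b = d * (u + 4) + b % d := by rw [← hu]; exact (Nat.div_add_mod b d).symm
    have hmod : b % d < d := Nat.mod_lt _ (by omega)
    have e1 : b / d - 4 = u := by omega
    have e2 : b + 2 - t = sv := by omega
    rw [e1, e2]
    -- (b+3)*(d+1) ≤ u*d + sv*d + ((3+t)*d + 3*(d+1))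
    have hsv' : sv = b + 2 - t := by omega
    zify
    have hb' : (b : ℤ) = d * (u + 4) + (b % d : ℕ) := by exact_mod_cast hdm
    have hsv'' : (sv : ℤ) + t = b + 2 := by exact_mod_cast hsv.symm
    have hmod' : ((b % d : ℕ) : ℤ) < d := by exact_mod_cast hmod
    nlinarith [hb', hsv'', hmod']
  -- pass to the reals
  have hVpos : 0 < ((V n).ncard : ℝ) := by
    rw [hV n]
    exact_mod_cast cubeGrid_ncard_pos d (aa_nonneg n)
  have hKpos : (0:ℝ) < (K : ℕ) := by
    have := two_pow_pos' ((3 + t) * d + 3 * (d + 1))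
    rw [hK]; exact_mod_cast this
  have hnpos : (0:ℝ) < (n : ℝ) ^ (d + 1) := by
    have : (0:ℝ) < (n : ℝ) := by exact_mod_cast Nat.pos_of_ne_zero hn0
    positivity
  have hB : (n : ℝ) ^ (d + 1) ≤ ((burnSet V (act d) n).ncard : ℝ) * K := by
    have h1 : (n : ℝ) ^ (d + 1) ≤ ((L ^ d * (2 * ρ + 1) ^ d * K : ℕ) : ℝ) := by
      exact_mod_cast hnat
    refine h1.trans ?_
    push_cast
    have h2 : ((L ^ d * (2 * ρ + 1) ^ d : ℕ) : ℝ) ≤ ((burnSet V (act d) n).ncard : ℝ) := by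
      exact_mod_cast hcard1
    push_cast at h2
    nlinarith
  have hVle : ((V n).ncard : ℝ) ≤ 5 ^ d * (n : ℝ) ^ (d + 1) := by
    set e : ℝ := ((d : ℝ) + 1) / (d : ℝ) with he
    have hfe : (1:ℝ) ≤ (n : ℝ) ^ e := by
      apply Real.one_le_rpow (by exact_mod_cast Nat.one_le_iff_ne_zero.mpr hn0) exp_nonneg
    have haa1 : (1:ℤ) ≤ aa d n := aa_one_le (Nat.one_le_iff_ne_zero.mpr hn0)
    have htoNat : (((2 * aa d n + 1).toNat : ℕ) : ℝ) = 2 * ((aa d n : ℤ) : ℝ) + 1 := by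
      have h0 : (0:ℤ) ≤ 2 * aa d n + 1 := by omega
      have h1 : (((2 * aa d n + 1).toNat : ℕ) : ℤ) = 2 * aa d n + 1 := Int.toNat_of_nonneg h0
      exact_mod_cast h1
    have hceil : ((aa d n : ℤ) : ℝ) < (n : ℝ) ^ e + 1 := by
      have := Int.ceil_lt_add_one ((n : ℝ) ^ e)
      exact_mod_cast this
    have hM5 : (((2 * aa d n + 1).toNat : ℕ) : ℝ) ≤ 5 * (n : ℝ) ^ e := by
      rw [htoNat]
      nlinarith
    have hMpow : (((2 * aa d n + 1).toNat : ℕ) : ℝ) ^ d ≤ (5 * (n : ℝ) ^ e) ^ d := by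
      apply pow_le_pow_left₀ (by positivity) hM5
    have hfd : ((n : ℝ) ^ e) ^ d = (n : ℝ) ^ (d + 1) := by
      rw [← Real.rpow_natCast ((n : ℝ) ^ e) d, ← Real.rpow_mul (by positivity)]
      have hde : e * (d : ℕ) = (d : ℝ) + 1 := by
        rw [he]
        field_simp
      rw [hde]
      rw [show ((d:ℝ) + 1) = ((d + 1 : ℕ) : ℝ) by push_cast; ring, Real.rpow_natCast]
    calc ((V n).ncard : ℝ) ≤ (((2 * aa d n + 1).toNat : ℕ) : ℝ) ^ d := by exact_mod_cast hcard2
      _ ≤ (5 * (n : ℝ) ^ e) ^ d := hMpow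
      _ = 5 ^ d * ((n : ℝ) ^ e) ^ d := by rw [mul_pow]
      _ = 5 ^ d * (n : ℝ) ^ (d + 1) := by rw [hfd]
  -- final computation
  have hBnn : (0:ℝ) ≤ ((burnSet V (act d) n).ncard : ℝ) := by positivity
  calc (1:ℝ) / ((K : ℕ) * 5 ^ d)
      = ((n : ℝ) ^ (d + 1) / K) / (5 ^ d * (n : ℝ) ^ (d + 1)) := by
        field_simp
    _ ≤ ((burnSet V (act d) n).ncard : ℝ) / (5 ^ d * (n : ℝ) ^ (d + 1)) := by
        have hnum : (n : ℝ) ^ (d + 1) / (K : ℕ) ≤ ((burnSet V (act d) n).ncard : ℝ) :=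
          (div_le_iff₀ hKpos).mpr hB
        gcongr
    _ ≤ ((burnSet V (act d) n).ncard : ℝ) / ((V n).ncard : ℝ) := by
        gcongr
    _ = densitySeq V (act d) n := rfl

end BurnAux

open Burning in
/-- for `d ≥ 2` and grids `S_n = [-⌈n^{(d+1)/d}⌉, ⌈n^{(d+1)/d}⌉]^d`,
there is an activator sequence with positive lower burning density. -/
theorem stmt16 (d : ℕ) (hd : 2 ≤ d)
    (V : ℕ → Set (Pt d))
    (hV : ∀ n : ℕ, V n = cubeGrid d ⌈(n : ℝ) ^ (((d : ℝ) + 1) / (d : ℝ))⌉) :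
    ∃ v : ℕ → Option (Pt d),
      IsActivator V v ∧
      0 < Filter.liminf (densitySeq V v) Filter.atTop := by
  have hd1 : 1 ≤ d := by omega
  have hV' : ∀ m, V m = cubeGrid d (BurnAux.aa d m) := hV
  refine ⟨BurnAux.act d, ?_, ?_⟩
  · intro n x h
    rw [hV' n]
    exact BurnAux.act_mem hd1 h
  · set δ : ℝ := (1:ℝ) / ((2 ^ ((3 + (Nat.log 2 d + 1)) * d + 3 * (d + 1)) : ℕ) * 5 ^ d) with hδ
    have hδpos : 0 < δ := by
      rw [hδ]
      have h1 : (0:ℝ) < ((2 ^ ((3 + (Nat.log 2 d + 1)) * d + 3 * (d + 1)) : ℕ) : ℝ) := by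
        exact_mod_cast BurnAux.two_pow_pos' _
      positivity
    have hub : ∀ m, densitySeq V (BurnAux.act d) m ≤ 1 := by
      intro m
      have hfin : (V m).Finite := by rw [hV' m]; exact BurnAux.cubeGrid_finite d _
      have hsub := BurnAux.burnSet_subset V (BurnAux.act d) hV' (BurnAux.act_zero d)
        (fun q P h => BurnAux.act_mem hd1 h) m
      have hle : (burnSet V (BurnAux.act d) m).ncard ≤ (V m).ncard :=
        Set.ncard_le_ncard hsub hfin
      have hpos : (0:ℝ) < ((V m).ncard : ℝ) := by
        rw [hV' m]
        exact_mod_cast BurnAux.cubeGrid_ncard_pos d (BurnAux.aa_nonneg m)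
      rw [densitySeq]
      exact (div_le_one hpos).mpr (by exact_mod_cast hle)
    have hev : ∀ᶠ m in Filter.atTop, δ ≤ densitySeq V (BurnAux.act d) m :=
      Filter.eventually_atTop.mpr
        ⟨2 ^ (8 * d + 3), fun m hm => BurnAux.density_lower hd V hV' hm⟩
    have hcb : Filter.IsCoboundedUnder (· ≥ ·) Filter.atTop (densitySeq V (BurnAux.act d)) :=
      Filter.isCoboundedUnder_ge_of_eventually_le Filter.atTop (Filter.Eventually.of_forall hub)
    exact lt_of_lt_of_le hδpos (Filter.le_liminf_of_le hcb hev)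
end

section
/- Let ε > 0 be a real number and, for every n ≥ 0, let S_n be the grid graph on vertex set [0, ⌊n^{ε/2}⌋] × [0, ⌊n^{2+ε/2}⌋] ⊆ ℤ². Then for every activator sequence v = (v_n)_{n≥0}, the burning density exists and δ(S, v) = 0; in particular, for every N, |B_N| ≤ Σ_{k=0}^{N} (2(N−k)+1)(⌊N^{ε/2}⌋+1) = o(|V(S_N)|) as N → ∞. -/
open Filter Topology

namespace Stmt17Aux
open Burning

def pairMap : ℤ × ℤ → Pt 2 := fun p => ![p.1, p.2]

lemma pairMap_inj : Function.Injective pairMap := by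
  intro p q h
  have h0 := congrFun h 0
  have h1 := congrFun h 1
  simp [pairMap] at h0 h1
  exact Prod.ext h0 h1

noncomputable def rectF (a lo hi : ℤ) : Finset (Pt 2) :=
  (Finset.Icc 0 a ×ˢ Finset.Icc lo hi).image pairMap

lemma mem_rectF {a lo hi : ℤ} {x : Pt 2} :
    x ∈ rectF a lo hi ↔ (0 ≤ x 0 ∧ x 0 ≤ a) ∧ (lo ≤ x 1 ∧ x 1 ≤ hi) := by
  constructor
  · intro h
    obtain ⟨⟨p, q⟩, hpq, rfl⟩ := Finset.mem_image.1 h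
    simp [Finset.mem_Icc, Finset.mem_product] at hpq
    simpa [pairMap] using hpq
  · intro h
    refine Finset.mem_image.2 ⟨(x 0, x 1), ?_, ?_⟩
    · simp [Finset.mem_Icc, Finset.mem_product]
      tauto
    · funext i; fin_cases i <;> simp [pairMap]

lemma card_rectF (a lo hi : ℤ) :
    (rectF a lo hi).card = (a + 1).toNat * (hi + 1 - lo).toNat := by
  rw [rectF, Finset.card_image_of_injective _ pairMap_inj, Finset.card_product,
    Int.card_Icc, Int.card_Icc]
  simp

noncomputable def Tf (ε : ℝ) (v : ℕ → Option (Pt 2)) (N k : ℕ) : Finset (Pt 2) :=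
  (v k).elim ∅ (fun p => rectF ⌊(N : ℝ) ^ (ε / 2)⌋ (p 1 - ((N : ℤ) - k)) (p 1 + ((N : ℤ) - k)))

lemma mem_Tf {ε : ℝ} {v : ℕ → Option (Pt 2)} {N k : ℕ} {x : Pt 2} :
    x ∈ Tf ε v N k ↔ ∃ p, v k = some p ∧ (0 ≤ x 0 ∧ x 0 ≤ ⌊(N : ℝ) ^ (ε / 2)⌋) ∧
      (p 1 - ((N : ℤ) - k) ≤ x 1 ∧ x 1 ≤ p 1 + ((N : ℤ) - k)) := by
  cases hvk : v k with
  | none => simp [Tf, hvk]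
  | some p => simp [Tf, hvk, mem_rectF]; try tauto

lemma floor_rpow_mono (ε : ℝ) (hε : 0 < ε) {m n : ℕ} (h : m ≤ n) :
    ⌊(m : ℝ) ^ (ε / 2)⌋ ≤ ⌊(n : ℝ) ^ (ε / 2)⌋ := by
  apply Int.floor_le_floor
  apply Real.rpow_le_rpow (by positivity) (by exact_mod_cast h) (by linarith)

lemma burn_sub (ε : ℝ) (hε : 0 < ε) (V : ℕ → Set (Pt 2))
    (hV : ∀ n : ℕ, V n =
      {x : Pt 2 | (0 ≤ x 0 ∧ x 0 ≤ ⌊(n : ℝ) ^ (ε / 2)⌋) ∧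
                  (0 ≤ x 1 ∧ x 1 ≤ ⌊(n : ℝ) ^ (2 + ε / 2)⌋)})
    (v : ℕ → Option (Pt 2)) (hv : IsActivator V v) :
    ∀ N, burnSet V v N ⊆ ↑((Finset.range (N + 1)).biUnion (Tf ε v N)) := by
  intro N
  induction N with
  | zero =>
    cases hv0 : v 0 with
    | none => simp [burnSet, hv0]
    | some p =>
      have hp := hv 0 p hv0
      rw [hV 0] at hp
      intro x hx
      simp [burnSet, hv0] at hx
      subst hx
      simp only [Finset.coe_biUnion, Set.mem_iUnion, Finset.mem_coe]
      exact ⟨0, by simp, mem_Tf.2 ⟨x, hv0, hp.1, by simp⟩⟩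
  | succ N ih =>
    intro x hx
    simp only [Finset.coe_biUnion, Set.mem_iUnion, Finset.mem_coe]
    have upgrade : ∀ y : Pt 2, y ∈ burnSet V v N →
        ∃ k ∈ Finset.range (N + 1), ∃ p, v k = some p ∧
          (0 ≤ y 0 ∧ y 0 ≤ ⌊(N : ℝ) ^ (ε / 2)⌋) ∧
          (p 1 - ((N : ℤ) - k) ≤ y 1 ∧ y 1 ≤ p 1 + ((N : ℤ) - k)) := by
      intro y hy
      have := ih hy
      simp only [Finset.coe_biUnion, Set.mem_iUnion, Finset.mem_coe] at this
      obtain ⟨k, hk, hmem⟩ := this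
      exact ⟨k, hk, mem_Tf.1 hmem⟩
    have hfl : ⌊(N : ℝ) ^ (ε / 2)⌋ ≤ ⌊((N + 1 : ℕ) : ℝ) ^ (ε / 2)⌋ :=
      floor_rpow_mono ε hε (Nat.le_succ N)
    rcases hx with hx | hx
    · rcases hx with hx | hx
      · -- x was already burned
        obtain ⟨k, hk, p, hvk, hx0, hx1⟩ := upgrade x hx
        refine ⟨k, ?_, mem_Tf.2 ⟨p, hvk, ⟨hx0.1, le_trans hx0.2 hfl⟩, ?_, ?_⟩⟩
        · simp only [Finset.mem_range] at hk ⊢; omega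
        · push_cast; push_cast at hx1; linarith [hx1.1]
        · push_cast; push_cast at hx1; linarith [hx1.2]
      · -- x is a neighbour of a burned vertex
        obtain ⟨hxV, b, hb, hdist⟩ := hx
        obtain ⟨k, hk, p, hvk, hb0, hb1⟩ := upgrade b hb
        rw [hV (N + 1)] at hxV
        have hd1 : |x 1 - b 1| ≤ 1 := by
          have hexp : |x 0 - b 0| + |x 1 - b 1| = 1 := by
            simpa [dist1, Fin.sum_univ_two] using hdist
          have := abs_nonneg (x 0 - b 0)
          omega
        refine ⟨k, ?_, mem_Tf.2 ⟨p, hvk, hxV.1, ?_, ?_⟩⟩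
        · simp only [Finset.mem_range] at hk ⊢; omega
        · push_cast; push_cast at hb1
          have := abs_le.1 hd1
          linarith [hb1.1, this.1]
        · push_cast; push_cast at hb1
          have := abs_le.1 hd1
          linarith [hb1.2, this.2]
    · -- newly activated
      cases hvs : v (N + 1) with
      | none => simp [hvs] at hx
      | some p =>
        simp [hvs] at hx
        subst hx
        have hp := hv (N + 1) x hvs
        rw [hV (N + 1)] at hp
        refine ⟨N + 1, by simp, mem_Tf.2 ⟨x, hvs, hp.1, ?_, ?_⟩⟩ <;> push_cast <;> linarith


lemma card_Tf_le (ε : ℝ) (hε : 0 < ε) (v : ℕ → Option (Pt 2)) {N k : ℕ} (hk : k ≤ N) :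
    ((Tf ε v N k).card : ℝ) ≤ (2 * ((N : ℝ) - k) + 1) * ((⌊(N : ℝ) ^ (ε / 2)⌋ : ℝ) + 1) := by
  have hA : (0:ℤ) ≤ ⌊(N : ℝ) ^ (ε / 2)⌋ :=
    Int.floor_nonneg.2 (Real.rpow_nonneg (Nat.cast_nonneg N) _)
  have hAr : (0:ℝ) ≤ (⌊(N : ℝ) ^ (ε / 2)⌋ : ℝ) := by exact_mod_cast hA
  have hNk : (0:ℝ) ≤ (N:ℝ) - k := by
    have : (k:ℝ) ≤ (N:ℝ) := by exact_mod_cast hk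
    linarith
  cases hvk : v k with
  | none =>
    simp only [Tf, hvk, Option.elim, Finset.card_empty, Nat.cast_zero]
    nlinarith
  | some p =>
    simp only [Tf, hvk, Option.elim]
    rw [card_rectF]
    have hr : (0:ℤ) ≤ (N : ℤ) - k := by omega
    have e1 : (((⌊(N : ℝ) ^ (ε / 2)⌋ + 1).toNat : ℕ) : ℝ) = (⌊(N : ℝ) ^ (ε / 2)⌋ : ℝ) + 1 := by
      exact_mod_cast Int.toNat_of_nonneg (by linarith)
    have e2 : ((((p 1 + ((N : ℤ) - k)) + 1 - (p 1 - ((N : ℤ) - k))).toNat : ℕ) : ℝ) =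
        2 * ((N : ℝ) - k) + 1 := by
      have h : (p 1 + ((N : ℤ) - k)) + 1 - (p 1 - ((N : ℤ) - k)) = 2 * ((N : ℤ) - k) + 1 := by
        ring
      have e : (((2 * ((N : ℤ) - k) + 1).toNat : ℕ) : ℝ) = ((2 * ((N : ℤ) - k) + 1 : ℤ) : ℝ) := by
        exact_mod_cast Int.toNat_of_nonneg (by linarith : (0:ℤ) ≤ 2 * ((N : ℤ) - k) + 1)
      rw [h, e]
      push_cast
      ring
    rw [Nat.cast_mul, e1, e2]
    exact le_of_eq (by ring)

end Stmt17Aux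

open Burning in
/-- for `ε > 0` and the thin grids
`S_n = [0, ⌊n^{ε/2}⌋] × [0, ⌊n^{2+ε/2}⌋]`, every activator sequence has burning
density `0`; moreover `|B_N| ≤ Σ_{k=0}^{N} (2(N−k)+1)(⌊N^{ε/2}⌋+1)`, and this sum
is `o(|V(S_N)|)` as `N → ∞`. -/
theorem stmt17 (ε : ℝ) (hε : 0 < ε)
    (V : ℕ → Set (Pt 2))
    (hV : ∀ n : ℕ, V n =
      {x : Pt 2 | (0 ≤ x 0 ∧ x 0 ≤ ⌊(n : ℝ) ^ (ε / 2)⌋) ∧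
                  (0 ≤ x 1 ∧ x 1 ≤ ⌊(n : ℝ) ^ (2 + ε / 2)⌋)}) :
    (∀ v : ℕ → Option (Pt 2), IsActivator V v →
      Filter.Tendsto (densitySeq V v) Filter.atTop (nhds 0) ∧
      ∀ N : ℕ, ((burnSet V v N).ncard : ℝ) ≤
        ∑ k ∈ Finset.range (N + 1),
          (2 * ((N : ℝ) - (k : ℝ)) + 1) * ((⌊(N : ℝ) ^ (ε / 2)⌋ : ℝ) + 1)) ∧
    (fun N : ℕ => ∑ k ∈ Finset.range (N + 1),
        (2 * ((N : ℝ) - (k : ℝ)) + 1) * ((⌊(N : ℝ) ^ (ε / 2)⌋ : ℝ) + 1))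
      =o[Filter.atTop] (fun N : ℕ => ((V N).ncard : ℝ)) := by
  have hA0 : ∀ n : ℕ, (0:ℤ) ≤ ⌊(n : ℝ) ^ (ε / 2)⌋ := fun n =>
    Int.floor_nonneg.2 (Real.rpow_nonneg (Nat.cast_nonneg n) _)
  have hB0 : ∀ n : ℕ, (0:ℤ) ≤ ⌊(n : ℝ) ^ (2 + ε / 2)⌋ := fun n =>
    Int.floor_nonneg.2 (Real.rpow_nonneg (Nat.cast_nonneg n) _)
  have hA0r : ∀ n : ℕ, (0:ℝ) ≤ (⌊(n : ℝ) ^ (ε / 2)⌋ : ℝ) := fun n => by exact_mod_cast hA0 n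
  have hB0r : ∀ n : ℕ, (0:ℝ) ≤ (⌊(n : ℝ) ^ (2 + ε / 2)⌋ : ℝ) := fun n => by exact_mod_cast hB0 n
  -- cardinality of the vertex sets
  have hVcard : ∀ n : ℕ, ((V n).ncard : ℝ) =
      ((⌊(n : ℝ) ^ (ε / 2)⌋ : ℝ) + 1) * ((⌊(n : ℝ) ^ (2 + ε / 2)⌋ : ℝ) + 1) := by
    intro n
    have hVn : V n = ↑(Stmt17Aux.rectF ⌊(n : ℝ) ^ (ε / 2)⌋ 0 ⌊(n : ℝ) ^ (2 + ε / 2)⌋) := by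
      rw [hV n]; ext x; simp [Stmt17Aux.mem_rectF]
    rw [hVn, Set.ncard_coe_finset, Stmt17Aux.card_rectF]
    have e1 : (((⌊(n : ℝ) ^ (ε / 2)⌋ + 1).toNat : ℕ) : ℝ) = (⌊(n : ℝ) ^ (ε / 2)⌋ : ℝ) + 1 := by
      exact_mod_cast Int.toNat_of_nonneg (by linarith [hA0 n])
    have e2 : (((⌊(n : ℝ) ^ (2 + ε / 2)⌋ + 1 - 0).toNat : ℕ) : ℝ) =
        (⌊(n : ℝ) ^ (2 + ε / 2)⌋ : ℝ) + 1 := by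
      rw [sub_zero]
      exact_mod_cast Int.toNat_of_nonneg (by linarith [hB0 n])
    rw [Nat.cast_mul, e1, e2]
  have hgpos : ∀ N : ℕ, (0:ℝ) < ((V N).ncard : ℝ) := by
    intro N
    rw [hVcard N]
    nlinarith [hA0r N, hB0r N]
  -- the burned-set bound
  have hbound : ∀ (v : ℕ → Option (Pt 2)), IsActivator V v → ∀ N : ℕ,
      ((burnSet V v N).ncard : ℝ) ≤ ∑ k ∈ Finset.range (N + 1),
        (2 * ((N : ℝ) - (k : ℝ)) + 1) * ((⌊(N : ℝ) ^ (ε / 2)⌋ : ℝ) + 1) := by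
    intro v hv N
    have h1 : (burnSet V v N).ncard ≤
        ((Finset.range (N + 1)).biUnion (Stmt17Aux.Tf ε v N)).card := by
      have h0 := Set.ncard_le_ncard (Stmt17Aux.burn_sub ε hε V hV v hv N)
        (Finset.finite_toSet _)
      rwa [Set.ncard_coe_finset] at h0
    have h2 : ((Finset.range (N + 1)).biUnion (Stmt17Aux.Tf ε v N)).card ≤
        ∑ k ∈ Finset.range (N + 1), (Stmt17Aux.Tf ε v N k).card := Finset.card_biUnion_le
    calc ((burnSet V v N).ncard : ℝ)
        ≤ ((∑ k ∈ Finset.range (N + 1), (Stmt17Aux.Tf ε v N k).card : ℕ) : ℝ) := by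
          exact_mod_cast le_trans h1 h2
      _ ≤ ∑ k ∈ Finset.range (N + 1),
            (2 * ((N : ℝ) - (k : ℝ)) + 1) * ((⌊(N : ℝ) ^ (ε / 2)⌋ : ℝ) + 1) := by
          push_cast
          apply Finset.sum_le_sum
          intro k hk
          exact Stmt17Aux.card_Tf_le ε hε v (Nat.lt_succ_iff.1 (Finset.mem_range.1 hk))
  -- summing the bound
  have hsum : ∀ N : ℕ, ∑ k ∈ Finset.range (N + 1), (2 * ((N : ℝ) - (k : ℝ)) + 1) =
      ((N : ℝ) + 1) ^ 2 := by
    intro N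
    have hS : (∑ k ∈ Finset.range (N + 1), (k : ℝ)) * 2 = ((N : ℝ) + 1) * (N : ℝ) := by
      have h := Finset.sum_range_id_mul_two (N + 1)
      have : ((∑ k ∈ Finset.range (N + 1), k : ℕ) : ℝ) * 2 = ((N + 1) * (N + 1 - 1) : ℕ) := by
        exact_mod_cast congrArg (Nat.cast : ℕ → ℝ) h
      push_cast at this
      simpa using this
    have hc : ∀ k ∈ Finset.range (N + 1),
        (2 * ((N : ℝ) - (k : ℝ)) + 1) = (2 * (N : ℝ) + 1) - 2 * (k : ℝ) := fun k _ => by ring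
    rw [Finset.sum_congr rfl hc, Finset.sum_sub_distrib, Finset.sum_const, ← Finset.mul_sum,
      Finset.card_range, nsmul_eq_mul]
    push_cast
    linear_combination (-1 : ℝ) * hS
  have hFeq : ∀ N : ℕ, (∑ k ∈ Finset.range (N + 1),
      (2 * ((N : ℝ) - (k : ℝ)) + 1) * ((⌊(N : ℝ) ^ (ε / 2)⌋ : ℝ) + 1)) =
      ((N : ℝ) + 1) ^ 2 * ((⌊(N : ℝ) ^ (ε / 2)⌋ : ℝ) + 1) := by
    intro N
    rw [← Finset.sum_mul, hsum N]
  -- the key ratio tends to zero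
  have hratio : Filter.Tendsto
      (fun N : ℕ => ((N : ℝ) + 1) ^ 2 / ((⌊(N : ℝ) ^ (2 + ε / 2)⌋ : ℝ) + 1))
      Filter.atTop (nhds 0) := by
    have htail : Filter.Tendsto (fun N : ℕ => 4 / ((N : ℝ) ^ (ε / 2))) Filter.atTop (nhds 0) := by
      have h1 : Filter.Tendsto (fun x : ℝ => x ^ (ε / 2)) Filter.atTop Filter.atTop :=
        tendsto_rpow_atTop (by linarith)
      have h2 : Filter.Tendsto (fun N : ℕ => ((N : ℝ)) ^ (ε / 2)) Filter.atTop Filter.atTop :=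
        h1.comp tendsto_natCast_atTop_atTop
      have h3 := h2.inv_tendsto_atTop
      have h4 := h3.const_mul (4 : ℝ)
      simpa [div_eq_mul_inv, mul_comm] using h4
    apply squeeze_zero' (g := fun N : ℕ => 4 / ((N : ℝ) ^ (ε / 2)))
    · filter_upwards with N
      have := hB0r N
      positivity
    · filter_upwards [Filter.eventually_ge_atTop 1] with N hN
      have hN1 : (1:ℝ) ≤ (N:ℝ) := by exact_mod_cast hN
      have hNpos : (0:ℝ) < (N:ℝ) := by linarith
      have hx : (0:ℝ) < (N:ℝ) ^ (2 + ε / 2) := Real.rpow_pos_of_pos hNpos _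
      have hden : (N:ℝ) ^ (2 + ε / 2) ≤ (⌊(N : ℝ) ^ (2 + ε / 2)⌋ : ℝ) + 1 :=
        le_of_lt (Int.lt_floor_add_one _)
      have hsplit : (N:ℝ) ^ (2 + ε / 2) = (N:ℝ) ^ 2 * (N:ℝ) ^ (ε / 2) := by
        rw [Real.rpow_add hNpos, show ((2:ℝ)) = ((2:ℕ):ℝ) by norm_num, Real.rpow_natCast]
      have step1 : ((N : ℝ) + 1) ^ 2 / ((⌊(N : ℝ) ^ (2 + ε / 2)⌋ : ℝ) + 1) ≤
          ((N : ℝ) + 1) ^ 2 / ((N:ℝ) ^ (2 + ε / 2)) := by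
        gcongr
      have step2 : ((N : ℝ) + 1) ^ 2 / ((N:ℝ) ^ (2 + ε / 2)) ≤ 4 / ((N : ℝ) ^ (ε / 2)) := by
        rw [hsplit, div_le_div_iff₀ (by positivity) (by positivity)]
        have ht : (0:ℝ) < (N:ℝ) ^ (ε / 2) := Real.rpow_pos_of_pos hNpos _
        nlinarith [sq_nonneg ((N:ℝ) - 1)]
      exact le_trans step1 step2
    · exact htail
  -- the ratio of bound to vertex count
  have hdiv : Filter.Tendsto (fun N : ℕ => (∑ k ∈ Finset.range (N + 1),
      (2 * ((N : ℝ) - (k : ℝ)) + 1) * ((⌊(N : ℝ) ^ (ε / 2)⌋ : ℝ) + 1)) / ((V N).ncard : ℝ))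
      Filter.atTop (nhds 0) := by
    apply hratio.congr
    intro N
    rw [hFeq N, hVcard N]
    have hA1 : (0:ℝ) < (⌊(N : ℝ) ^ (ε / 2)⌋ : ℝ) + 1 := by linarith [hA0r N]
    have hB1 : (0:ℝ) < (⌊(N : ℝ) ^ (2 + ε / 2)⌋ : ℝ) + 1 := by linarith [hB0r N]
    rw [div_eq_div_iff hB1.ne' (by positivity)]
    ring
  constructor
  · intro v hv
    refine ⟨?_, hbound v hv⟩
    apply squeeze_zero (g := fun N : ℕ => (∑ k ∈ Finset.range (N + 1),
      (2 * ((N : ℝ) - (k : ℝ)) + 1) * ((⌊(N : ℝ) ^ (ε / 2)⌋ : ℝ) + 1)) / ((V N).ncard : ℝ))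
    · intro n
      exact div_nonneg (Nat.cast_nonneg _) (Nat.cast_nonneg _)
    · intro n
      exact div_le_div_of_nonneg_right (hbound v hv n) (Nat.cast_nonneg _)
    · exact hdiv
  · rw [Asymptotics.isLittleO_iff_tendsto fun N h => absurd h (hgpos N).ne']
    exact hdiv
end
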